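/- For every n ≥ 0, λ > 0, and μ ≠ 0, d/dx[(1+x)^μ C_n^{(λ)}(x)] = λ(1+x)^{μ−1}[(1 + (μ−λ)/(n+λ))C_n^{(λ+1)}(x) + 2C_{n−1}^{(λ+1)}(x) + (1 − (μ−λ)/(n+λ))C_{n−2}^{(λ+1)}(x)] for x ∈ (−1,1), where C_{−1}^{(λ+1)} = C_{−2}^{(λ+1)} = 0. -/

import Mathlib

open Real intervalIntegral

/-- Ultraspherical (Gegenbauer) polynomials via the three-term recurrence
`(n+1) C_{n+1} = 2(n+λ) x C_n − (n+2λ−1) C_{n−1}`, `C_0 = 1`, `C_{-1} = 0`. -/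
noncomputable def Geg (l : ℝ) : ℕ → ℝ → ℝ
  | 0, _ => 1
  | 1, x => 2 * l * x
  | (n + 2), x =>
      (2 * ((n : ℝ) + 1 + l) * x * Geg l (n + 1) x
        - ((n : ℝ) + 2 * l) * Geg l n x) / ((n : ℝ) + 2)

/-- Ultraspherical polynomials with integer index, zero for negative index. -/
noncomputable def GegZ (l : ℝ) (n : ℤ) (x : ℝ) : ℝ :=
  if 0 ≤ n then Geg l n.toNat x else 0

/-!
Comparing coefficients in `(1 - 2xt + t²)^(-λ) = (1 - 2xt + t²) (1 - 2xt + t²)^(-λ-1)` suggests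
`C_n^(λ) = C_n^(λ+1) - 2x C_{n-1}^(λ+1) + C_{n-2}^(λ+1)`, which also follows from the three-term
recurrence alone. Together with the recurrence for `C^(λ+1)` it gives the connection formula
`(n + λ) C_n^(λ) = λ (C_n^(λ+1) - C_{n-2}^(λ+1))`, and from that `d/dx C_n^(λ) = 2λ C_{n-1}^(λ+1)`.
The product rule and one more use of the connection formula and the recurrence give the theorem.
-/

lemma Int.induction_of_neg_of_two_step {P : ℤ → Prop} (neg : ∀ n < 0, P n) (zero : P 0)
    (step : ∀ n, -1 ≤ n → P n → P (n + 1) → P (n + 2)) (n : ℤ) : P n := by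
  have h : ∀ m : ℕ, P ((m : ℤ) - 1) ∧ P m := by
    intro m
    induction m with
    | zero => exact ⟨neg _ (by norm_num), zero⟩
    | succ m ih =>
      refine ⟨by simpa using ih.2, ?_⟩
      rw [show ((m + 1 : ℕ) : ℤ) = (m : ℤ) - 1 + 2 by push_cast; ring]
      exact step _ (by omega) ih.1 (by simpa using ih.2)
  rcases lt_or_ge n 0 with hn | hn
  · exact neg n hn
  · obtain ⟨m, rfl⟩ := Int.eq_ofNat_of_zero_le hn
    exact (h m).2

section GegZ

variable (l x : ℝ)

@[simp]
lemma GegZ_natCast (n : ℕ) : GegZ l n x = Geg l n x := by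
  simp [GegZ]

lemma GegZ_of_neg {n : ℤ} (hn : n < 0) : GegZ l n x = 0 := by
  simp [GegZ, not_le.mpr hn]

/-- Extending by zero to negative indices, the three-term recurrence holds for every `n : ℤ`. -/
lemma GegZ_recurrence (n : ℤ) :
    (n : ℝ) * GegZ l n x
      = 2 * ((n : ℝ) - 1 + l) * x * GegZ l (n - 1) x - ((n : ℝ) + 2 * l - 2) * GegZ l (n - 2) x := by
  obtain hn | rfl | hn : n < 0 ∨ n = 0 ∨ 0 < n := by omega
  · simp [GegZ_of_neg, hn, show n - 1 < 0 by omega, show n - 2 < 0 by omega]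
  · simp [GegZ_of_neg]
  obtain ⟨m, rfl⟩ : ∃ m : ℕ, n = m + 1 := ⟨(n - 1).toNat, by omega⟩
  rcases m with _ | m
  · simp [GegZ, Geg]
  · have hm : ((m : ℝ) + 2) ≠ 0 := by positivity
    rw [show ((m + 1 : ℕ) : ℤ) + 1 = ((m + 2 : ℕ) : ℤ) by push_cast; ring,
      show ((m + 2 : ℕ) : ℤ) - 1 = ((m + 1 : ℕ) : ℤ) by push_cast; ring,
      show ((m + 2 : ℕ) : ℤ) - 2 = (m : ℤ) by push_cast; ring]
    simp only [GegZ_natCast, Geg]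
    push_cast
    field_simp
    ring

lemma GegZ_eq_GegZ_add_one (n : ℤ) :
    GegZ l n x = GegZ (l + 1) n x - 2 * x * GegZ (l + 1) (n - 1) x + GegZ (l + 1) (n - 2) x := by
  induction n using Int.induction_of_neg_of_two_step with
  | neg n hn => simp [GegZ_of_neg, hn, show n - 1 < 0 by omega, show n - 2 < 0 by omega]
  | zero => simp [GegZ, Geg]
  | step n hn ih₀ ih₁ =>
    have hn2 : (n : ℝ) + 2 ≠ 0 := by exact_mod_cast (by omega : n + 2 ≠ 0)
    have rC := GegZ_recurrence l x (n + 2)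
    have rD₂ := GegZ_recurrence (l + 1) x (n + 2)
    have rD₁ := GegZ_recurrence (l + 1) x (n + 1)
    have rD₀ := GegZ_recurrence (l + 1) x n
    rw [show n + 1 - 1 = n by ring, show n + 1 - 2 = n - 1 by ring] at ih₁ rD₁
    rw [show n + 2 - 1 = n + 1 by ring, show n + 2 - 2 = n by ring] at rC rD₂ ⊢
    push_cast at rC rD₂ rD₁
    apply mul_left_cancel₀ hn2
    linear_combination rC + 2 * (n + 1 + l) * x * ih₁ - (n + 2 * l) * ih₀ - rD₂
      + 2 * x * rD₁ - rD₀

lemma GegZ_connection (n : ℤ) :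
    ((n : ℝ) + l) * GegZ l n x = l * (GegZ (l + 1) n x - GegZ (l + 1) (n - 2) x) := by
  linear_combination ((n : ℝ) + l) * GegZ_eq_GegZ_add_one l x n + GegZ_recurrence (l + 1) x n

end GegZ

lemma GegZ_add_two_eq (l : ℝ) {n : ℤ} (hn : -1 ≤ n) :
    GegZ l (n + 2) = fun y => (2 * ((n : ℝ) + 1 + l) * y * GegZ l (n + 1) y
      - ((n : ℝ) + 2 * l) * GegZ l n y) / ((n : ℝ) + 2) := by
  have hn2 : (n : ℝ) + 2 ≠ 0 := by exact_mod_cast (by omega : n + 2 ≠ 0)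
  funext y
  rw [eq_div_iff hn2]
  have h := GegZ_recurrence l y (n + 2)
  rw [show n + 2 - 1 = n + 1 by ring, show n + 2 - 2 = n by ring] at h
  push_cast at h
  linear_combination h

theorem hasDerivAt_GegZ (l : ℝ) (n : ℤ) (x : ℝ) :
    HasDerivAt (GegZ l n) (2 * l * GegZ (l + 1) (n - 1) x) x := by
  induction n using Int.induction_of_neg_of_two_step with
  | neg n hn =>
    have h : GegZ l n = fun _ => 0 := funext fun y => GegZ_of_neg l y hn
    simpa [h, GegZ_of_neg, show n - 1 < 0 by omega] using hasDerivAt_const x (0 : ℝ)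
  | zero =>
    have h : GegZ l 0 = fun _ => 1 := funext fun y => by simp [GegZ, Geg]
    simpa [h, GegZ_of_neg] using hasDerivAt_const x (1 : ℝ)
  | step n hn ih₀ ih₁ =>
    have hn2 : (n : ℝ) + 2 ≠ 0 := by exact_mod_cast (by omega : n + 2 ≠ 0)
    rw [GegZ_add_two_eq l hn]
    refine ((((hasDerivAt_id x).const_mul (2 * ((n : ℝ) + 1 + l))).mul ih₁).sub
      (ih₀.const_mul ((n : ℝ) + 2 * l))).div_const _ |>.congr_deriv ?_
    have conn := GegZ_connection l x (n + 1)
    have rD := GegZ_recurrence (l + 1) x (n + 1)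
    rw [show n + 1 - 2 = n - 1 by ring] at conn
    rw [show n + 1 - 1 = n by ring, show n + 1 - 2 = n - 1 by ring] at rD
    rw [show n + 1 - 1 = n by ring, show n + 2 - 1 = n + 1 by ring, id, div_eq_iff hn2]
    push_cast at conn rD
    linear_combination 2 * conn - 2 * l * rD

theorem stmt12_general (l μ : ℝ) (hl : 0 < l) (n : ℤ) (hn : 0 ≤ n) (x : ℝ)
    (hx : x ∈ Set.Ioo (-1 : ℝ) 1) :
    HasDerivAt (fun y => (1 + y) ^ μ * GegZ l n y)
      (l * (1 + x) ^ (μ - 1) *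
        ((1 + (μ - l) / ((n : ℝ) + l)) * GegZ (l + 1) n x
          + 2 * GegZ (l + 1) (n - 1) x
          + (1 - (μ - l) / ((n : ℝ) + l)) * GegZ (l + 1) (n - 2) x)) x := by
  have hx₀ : (1 : ℝ) + x ≠ 0 := by linarith [hx.1]
  have hnl : (n : ℝ) + l ≠ 0 := by
    have : (0 : ℝ) ≤ n := by exact_mod_cast hn
    linarith
  have hpow : HasDerivAt (fun y : ℝ => (1 + y) ^ μ) (1 * μ * (1 + x) ^ (μ - 1)) x :=
    ((hasDerivAt_id x).const_add 1).rpow_const (Or.inl hx₀)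
  refine (hpow.mul (hasDerivAt_GegZ l n x)).congr_deriv ?_
  have key : μ * GegZ l n x + (1 + x) * (2 * l * GegZ (l + 1) (n - 1) x)
      = l * ((1 + (μ - l) / ((n : ℝ) + l)) * GegZ (l + 1) n x + 2 * GegZ (l + 1) (n - 1) x
          + (1 - (μ - l) / ((n : ℝ) + l)) * GegZ (l + 1) (n - 2) x) := by
    field_simp
    linear_combination μ * GegZ_connection l x n - l * GegZ_recurrence (l + 1) x n
  rw [show (1 + x) ^ μ = (1 + x) ^ (μ - 1) * (1 + x) by rw [← rpow_add_one hx₀, sub_add_cancel]]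
  linear_combination (1 + x) ^ (μ - 1) * key

theorem stmt12 (l μ : ℝ) (hl : 0 < l) (hμ : μ ≠ 0) (n : ℤ) (hn : 0 ≤ n) (x : ℝ)
    (hx : x ∈ Set.Ioo (-1 : ℝ) 1) :
    HasDerivAt (fun y => (1 + y) ^ μ * GegZ l n y)
      (l * (1 + x) ^ (μ - 1) *
        ((1 + (μ - l) / ((n : ℝ) + l)) * GegZ (l + 1) n x
          + 2 * GegZ (l + 1) (n - 1) x
          + (1 - (μ - l) / ((n : ℝ) + l)) * GegZ (l + 1) (n - 2) x)) x :=
  stmt12_general l μ hl n hn x hx
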